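/- Let n be a positive integer divisible by 2. Let D_1 and D_2 be sets of divisors of n with n ∉ D_1 and n ∉ D_2. If the integral circulant graphs ICG(n,D_1) and ICG(n,D_2) are isospectral, then n/2 does not belong to the symmetric difference D_1 △ D_2. -/

import Mathlib

open Finset

/-!
Isospectral circulant graphs have the same degree: `λ_n(S) = |S|` lies in the spectrum, and every
eigenvalue has modulus at most `|S|`, so `|S|` is the largest modulus in the spectrum. Moreover
`j ↦ n - j` is an involution of the connection set of `ICG(n, D)` (it preserves `gcd(j, n)`, and
`n ∉ D` keeps `j = n` out), whose only possible fixed point is `n / 2`. Hence the degree of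
`ICG(n, D)` is odd exactly when `n / 2 ∈ D`.
-/

/-- `ω_n = exp(2πi/n)`. -/
noncomputable def omegaN (n : ℕ) : ℂ := Complex.exp (2 * Real.pi * Complex.I / n)

/-- `λ_k(S) = ∑_{g ∈ S} ω_n^{k g}`, the eigenvalues of the circulant graph `Cay(ℤ_n, S)`. -/
noncomputable def lam (n : ℕ) (S : Finset ℕ) (k : ℕ) : ℂ :=
  ∑ g ∈ S, omegaN n ^ (k * g)

/-- The spectrum of `Cay(ℤ_n, S)`, i.e. the multiset `(λ_k(S))_{k ∈ [n]}`. -/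
noncomputable def spec (n : ℕ) (S : Finset ℕ) : Multiset ℂ :=
  (Finset.Icc 1 n).val.map (lam n S)

/-- The connection set of `ICG(n, D)`:
`⋃_{d ∈ D} G_n(d) = {j ∈ [n] : gcd(j,n) ∈ D}` where `G_n(d) = {j ∈ [n] : gcd(j,n) = d}`. -/
def connSet (n : ℕ) (D : Finset ℕ) : Finset ℕ :=
  (Finset.Icc 1 n).filter (fun j => Nat.gcd j n ∈ D)

lemma norm_omegaN (n : ℕ) : ‖omegaN n‖ = 1 := by
  rw [omegaN, Complex.norm_exp]
  simp

lemma omegaN_pow_self (n : ℕ) : omegaN n ^ n = 1 := by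
  rcases Nat.eq_zero_or_pos n with rfl | hn
  · simp
  · exact (Complex.isPrimitiveRoot_exp n hn.ne').pow_eq_one

lemma lam_self (n : ℕ) (S : Finset ℕ) : lam n S n = #S := by
  simp [lam, pow_mul, omegaN_pow_self]

lemma norm_lam_le (n : ℕ) (S : Finset ℕ) (k : ℕ) : ‖lam n S k‖ ≤ #S :=
  (norm_sum_le _ _).trans_eq (by simp [norm_omegaN])

lemma card_le_card_of_spec_eq {n : ℕ} (hn : 0 < n) {S T : Finset ℕ}
    (h : spec n S = spec n T) : #S ≤ #T := by
  have hS : (#S : ℂ) ∈ spec n T := by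
    rw [← h, ← lam_self]
    exact Multiset.mem_map_of_mem _ (mem_Icc.2 ⟨hn, le_rfl⟩ : n ∈ Icc 1 n)
  obtain ⟨k, -, hk⟩ := Multiset.mem_map.1 hS
  have := norm_lam_le n T k
  rwa [hk, Complex.norm_natCast, Nat.cast_le] at this

lemma card_eq_card_of_spec_eq {n : ℕ} (hn : 0 < n) {S T : Finset ℕ}
    (h : spec n S = spec n T) : #S = #T :=
  (card_le_card_of_spec_eq hn h).antisymm (card_le_card_of_spec_eq hn h.symm)

lemma card_cast_zmod_two_eq_card_fixed {α : Type*} [DecidableEq α] {s : Finset α} (f : α → α)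
    (hf : ∀ a ∈ s, f a ∈ s) (hff : ∀ a ∈ s, f (f a) = a) :
    (#s : ZMod 2) = #{a ∈ s | f a = a} := by
  have hmoved : (#{a ∈ s | f a ≠ a} : ZMod 2) = 0 := by
    rw [card_eq_sum_ones, Nat.cast_sum, Nat.cast_one]
    refine sum_involution (fun a _ => f a) (fun _ _ => by decide) (fun a ha _ => ?_)
      (fun a ha => ?_) (fun a ha => hff a (mem_filter.1 ha).1)
    · exact (mem_filter.1 ha).2
    · obtain ⟨has, hfa⟩ := mem_filter.1 ha
      exact mem_filter.2 ⟨hf a has, fun h => hfa ((hff a has).symm.trans h).symm⟩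
  rw [← card_filter_add_card_filter_not (fun a => f a = a), Nat.cast_add, hmoved, add_zero]

lemma sub_mem_connSet {n : ℕ} {D : Finset ℕ} (hnD : n ∉ D) {j : ℕ} (hj : j ∈ connSet n D) :
    n - j ∈ connSet n D := by
  simp only [connSet, mem_filter, mem_Icc] at hj ⊢
  obtain ⟨⟨hj1, hjn⟩, hjD⟩ := hj
  have hjlt : j < n := hjn.lt_of_ne (by rintro rfl; simp_all)
  exact ⟨⟨by omega, by omega⟩, by rwa [Nat.gcd_self_sub_left hjn]⟩

lemma card_connSet_cast_zmod_two {n : ℕ} (hn : 0 < n) (h2 : 2 ∣ n) {D : Finset ℕ}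
    (hnD : n ∉ D) : (#(connSet n D) : ZMod 2) = if n / 2 ∈ D then 1 else 0 := by
  have hfixed : {j ∈ connSet n D | n - j = j} = {j ∈ connSet n D | j = n / 2} := by
    refine filter_congr fun j hj => ?_
    have := (mem_Icc.1 (mem_filter.1 hj).1).2
    omega
  have hhalf : n / 2 ∈ connSet n D ↔ n / 2 ∈ D := by
    simp only [connSet, mem_filter, mem_Icc, Nat.div_le_self, and_true,
      Nat.gcd_eq_left (Nat.div_dvd_of_dvd h2), and_iff_right_iff_imp]
    omega
  rw [card_cast_zmod_two_eq_card_fixed (n - ·) (fun _ => sub_mem_connSet hnD)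
    (fun j hj => Nat.sub_sub_self (mem_Icc.1 (mem_filter.1 hj).1).2), hfixed, filter_eq']
  split_ifs <;> simp_all

theorem half_not_mem_symmDiff_general
    (n : ℕ) (hn : 0 < n) (h2 : 2 ∣ n)
    (D₁ D₂ : Finset ℕ)
    (hn₁ : n ∉ D₁) (hn₂ : n ∉ D₂)
    (hspec : spec n (connSet n D₁) = spec n (connSet n D₂)) :
    n / 2 ∉ (D₁ \ D₂) ∪ (D₂ \ D₁) := by
  have hparity := card_connSet_cast_zmod_two hn h2 hn₁
  rw [card_eq_card_of_spec_eq hn hspec, card_connSet_cast_zmod_two hn h2 hn₂] at hparity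
  simp only [mem_union, mem_sdiff]
  split_ifs at hparity <;> simp_all

/-- For even `n`, if the integral circulant graphs are isospectral then `n/2` does not lie in
the symmetric difference of the divisor sets. -/
theorem half_not_mem_symmDiff
    (n : ℕ) (hn : 0 < n) (h2 : 2 ∣ n)
    (D₁ D₂ : Finset ℕ)
    (hD₁ : D₁ ⊆ n.divisors) (hD₂ : D₂ ⊆ n.divisors)
    (hn₁ : n ∉ D₁) (hn₂ : n ∉ D₂)
    (hspec : spec n (connSet n D₁) = spec n (connSet n D₂)) :
    n / 2 ∉ (D₁ \ D₂) ∪ (D₂ \ D₁) :=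
  half_not_mem_symmDiff_general n hn h2 D₁ D₂ hn₁ hn₂ hspec
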